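/- Let a be a strongly k-right transient arrow environment (k-right transient with respect to every k-tuple of initial positions). Then for any m ∈ ℤ, any initial positions x_1,…,x_k < m, and all x ≥ m, i ≥ 1: LO^{x_1,…,x_k}(a)(x,i) = LO^{m,…,m}(a)(x,i). That is, the k-leftover environment to the right of m does not depend on the choice of starting points to the left of m. -/

import Mathlib

open MeasureTheory Filter

noncomputable section

attribute [local instance 10] Classical.propDecidable

/-- An arrow environment: for each site `x : ℤ` a sequence of arrows (values `±1`). -/
abbrev Env := ℤ → ℕ → ℤ

/-- A cookie environment. -/
abbrev CEnv := ℤ → ℕ → ℝ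

/-- All arrows are `±1`. -/
def IsArrow (a : Env) : Prop := ∀ x n, a x n = 1 ∨ a x n = -1

/-- Non-degeneracy: in every column there are infinitely many sign changes. -/
def NonDeg (a : Env) : Prop := ∀ x : ℤ, ∀ N : ℕ, ∃ n, N ≤ n ∧ a x n ≠ a x (n + 1)

/-- State of the single walk on an arrow environment started at `x0`:
position together with the local time function (number of visits so far). -/
def walkState (a : Env) (x0 : ℤ) : ℕ → ℤ × (ℤ → ℕ)
  | 0 => (x0, fun _ => 0)
  | t + 1 =>
    let s := walkState a x0 t
    let L' := Function.update s.2 s.1 (s.2 s.1 + 1)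
    (s.1 + a s.1 (L' s.1), L')

/-- Position of the walk on `a` started at `x0` at time `t`. -/
def walkX (a : Env) (x0 : ℤ) (t : ℕ) : ℤ := (walkState a x0 t).1

/-- Asymptotic local time of the walk on `a` started at `x0`, at site `x`. -/
def walkLocal (a : Env) (x0 x : ℤ) : ℕ∞ := ⨆ t, ((walkState a x0 t).2 x : ℕ∞)

/-- `a` is transient: the asymptotic local time of the walk started at `0` is finite everywhere. -/
def Transient (a : Env) : Prop := ∀ x : ℤ, walkLocal a 0 x < ⊤

/-- The leftover environment after the walk started at `0`. -/
def leftoverEnv (a : Env) : Env := fun x n => a x (n + (walkLocal a 0 x).toNat)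

/-- Iterated leftover environments. -/
def iterLO (a : Env) : ℕ → Env
  | 0 => a
  | j + 1 => leftoverEnv (iterLO a j)

/-- `a` is `k`-transient. -/
def KTransient (a : Env) (k : ℕ) : Prop := ∀ j < k, Transient (iterLO a j)

/-- `a` is `k`-right transient: each of the `k` sequential walkers tends to `+∞`. -/
def KRightTransient (a : Env) (k : ℕ) : Prop :=
  ∀ j < k, Tendsto (walkX (iterLO a j) 0) atTop atTop

/-- The sequential local time `L^{(k-seq)}`. -/
def seqLocal (a : Env) (k : ℕ) (x : ℤ) : ℕ :=
  ∑ j ∈ Finset.range k, (walkLocal (iterLO a j) 0 x).toNat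

/-- State of the `S`-mob walk of `k` particles with initial positions `init`. -/
def mobState (a : Env) {k : ℕ} (S : ℕ → Fin k) (init : Fin k → ℤ) :
    ℕ → (Fin k → ℤ) × (ℤ → ℕ)
  | 0 => (init, fun _ => 0)
  | t + 1 =>
    let s := mobState a S init t
    let pos := s.1 (S t)
    let L' := Function.update s.2 pos (s.2 pos + 1)
    (Function.update s.1 (S t) (pos + a pos (L' pos)), L')

/-- Asymptotic local time of the `S`-mob walk. -/
def mobLocal (a : Env) {k : ℕ} (S : ℕ → Fin k) (init : Fin k → ℤ) (x : ℤ) : ℕ∞ :=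
  ⨆ t, ((mobState a S init t).2 x : ℕ∞)

/-- A `k`-scheduling is proper if every particle is chosen infinitely often. -/
def ProperSched {k : ℕ} (S : ℕ → Fin k) : Prop := ∀ j : Fin k, ∀ N : ℕ, ∃ t, N ≤ t ∧ S t = j

/-- Smallest index attaining the minimum of `X`. -/
def minIdx {k : ℕ} (hk : k ≠ 0) (X : Fin k → ℤ) : Fin k :=
  (Finset.univ.filter fun j => ∀ i, X j ≤ X i).min' (by
    obtain ⟨j, -, hj⟩ := Finset.exists_min_image Finset.univ X
      ⟨⟨0, Nat.pos_of_ne_zero hk⟩, Finset.mem_univ _⟩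
    exact ⟨j, Finset.mem_filter.mpr ⟨Finset.mem_univ _, fun i => hj i (Finset.mem_univ _)⟩⟩)

/-- State of the `k`-min mob walk: at every step the leftmost particle
(ties broken by particle index) moves. -/
def minMobState (a : Env) {k : ℕ} (hk : k ≠ 0) (init : Fin k → ℤ) :
    ℕ → (Fin k → ℤ) × (ℤ → ℕ)
  | 0 => (init, fun _ => 0)
  | t + 1 =>
    let s := minMobState a hk init t
    let j := minIdx hk s.1
    let pos := s.1 j
    let L' := Function.update s.2 pos (s.2 pos + 1)
    (Function.update s.1 j (pos + a pos (L' pos)), L')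

/-- The `k`-minimum walk: position of the leftmost particle of the `k`-min mob walk. -/
def minWalkPos (a : Env) {k : ℕ} (hk : k ≠ 0) (init : Fin k → ℤ) (t : ℕ) : ℤ :=
  (minMobState a hk init t).1 (minIdx hk (minMobState a hk init t).1)

/-- The position reached by the particle moved at step `t` of the `k`-min mob walk. -/
def minMoveTo (a : Env) {k : ℕ} (hk : k ≠ 0) (init : Fin k → ℤ) (t : ℕ) : ℤ :=
  (minMobState a hk init (t + 1)).1 (minIdx hk (minMobState a hk init t).1)

/-- Asymptotic local time of the `k`-min mob walk. -/
def minMobLocal (a : Env) {k : ℕ} (hk : k ≠ 0) (init : Fin k → ℤ) (x : ℤ) : ℕ∞ :=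
  ⨆ t, ((minMobState a hk init t).2 x : ℕ∞)

/-- `t` is earlier than the hitting time `t₋₁` of `-1` by the `k`-minimum walk started at `0`. -/
def beforeHit (a : Env) {k : ℕ} (hk : k ≠ 0) (t : ℕ) : Prop :=
  ∀ s ≤ t, minWalkPos a hk (fun _ => 0) s ≠ -1

/-- The quantity `w_n` (an extended natural number): `w_0 = k`, and for `n ≠ 0`,
`w_n = #{t < t₋₁ : X_t = n-1, X moved to ≠ n-2}` for the `k`-min mob walk started at `0`. -/
def wfun (a : Env) {k : ℕ} (hk : k ≠ 0) (n : ℤ) : ℕ∞ :=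
  if n = 0 then (k : ℕ∞) else
    ⨆ T, (((Finset.range T).filter fun t => beforeHit a hk t ∧
      minWalkPos a hk (fun _ => 0) t = n - 1 ∧
      minMoveTo a hk (fun _ => 0) t ≠ n - 2).card : ℕ∞)

/-- Number of left crossings of the edge `(n, n-1)` by the `k`-min mob walk (started at `0`)
among the first `T` steps. -/
def leftCrossUpTo (a : Env) {k : ℕ} (hk : k ≠ 0) (n : ℤ) (T : ℕ) : ℕ :=
  ((Finset.range T).filter fun t => minWalkPos a hk (fun _ => 0) t = n ∧
    minMoveTo a hk (fun _ => 0) t = n - 1).card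

/-- Total number of left crossings of the edge `(n, n-1)` by the `k`-min mob walk. -/
def leftCrossTotal (a : Env) {k : ℕ} (hk : k ≠ 0) (n : ℤ) : ℕ∞ :=
  ⨆ T, (leftCrossUpTo a hk n T : ℕ∞)

/-- Number of left arrows (i.e. values `≠ 1`) among `c 1, …, c t`. -/
def leftsUpTo (c : ℕ → ℤ) (t : ℕ) : ℕ := ((Finset.Icc 1 t).filter fun i => c i ≠ 1).card

/-- Number of right arrows (i.e. values `= 1`) among `c 1, …, c t`. -/
def rightsUpTo (c : ℕ → ℤ) (t : ℕ) : ℕ := ((Finset.Icc 1 t).filter fun i => c i = 1).card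

/-- The number of right arrows occurring in `c 1, c 2, …` before the `j`-th left arrow. -/
def rightsBeforeLefts (j : ℕ) (c : ℕ → ℤ) : ℕ := sInf {t | j ≤ leftsUpTo c t} - j

/-- The number of left arrows occurring in `c 1, c 2, …` before the `j`-th right arrow. -/
def leftsBeforeRights (j : ℕ) (c : ℕ → ℤ) : ℕ := sInf {t | j ≤ rightsUpTo c t} - j

/-- The backward process `z` associated to an arrow environment and `k` particles:
`z 0 = k` and `z (n+1)` is the number of right arrows in column `n` occurring before
`z n - (k-1)` left arrows when `z n ≥ k`, and `0` otherwise. -/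
def zProc (a : Env) (k : ℕ) : ℕ → ℕ
  | 0 => k
  | n + 1 =>
    if k ≤ zProc a k n then
      rightsBeforeLefts (zProc a k n - (k - 1)) (fun i => a (n : ℤ) i)
    else 0

/-- `a` is `k`-right transient with respect to the initial positions `init`:
all particles of the `k`-min mob walk tend to `+∞`. -/
def KRightTransientFrom (a : Env) {k : ℕ} (hk : k ≠ 0) (init : Fin k → ℤ) : Prop :=
  ∀ j : Fin k, Tendsto (fun t => (minMobState a hk init t).1 j) atTop atTop

/-- `a` is strongly `k`-right transient. -/
def StronglyKRightTransient (a : Env) {k : ℕ} (hk : k ≠ 0) : Prop :=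
  ∀ init : Fin k → ℤ, KRightTransientFrom a hk init

/-- The leftover environment of the `k`-mob walk with initial positions `init`. -/
def mobLO (a : Env) {k : ℕ} (hk : k ≠ 0) (init : Fin k → ℤ) : Env :=
  fun x n => a x (n + (minMobLocal a hk init x).toNat)

/-- Shift on arrow environments. -/
def envShift : Env → Env := fun a x n => a (x + 1) n

/-- Shift on cookie environments. -/
def cookieShift : CEnv → CEnv := fun ω x n => ω (x + 1) n

/-- Restriction of an arrow environment to the nonnegative sites. -/
def restNonneg : Env → (ℕ → ℕ → ℤ) := fun a n i => a (n : ℤ) i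

/-- Shift on one-sided environments. -/
def seqShift : (ℕ → ℕ → ℤ) → (ℕ → ℕ → ℤ) := fun b n i => b (n + 1) i

/-- The success probabilities for a bounded cookie stack `p` with `M` cookies per site
(fair coins afterwards). -/
def qOf (M : ℕ) (p : ℕ → ℝ) (i : ℕ) : ℝ := if 1 ≤ i ∧ i ≤ M then p i else 1 / 2

/-- The expected total drift per site `δ`. -/
def driftSum (M : ℕ) (p : ℕ → ℝ) : ℝ := ∑ i ∈ Finset.Icc 1 M, (2 * p i - 1)

/-- `μ` is the annealed measure on arrow environments corresponding to i.i.d. cookie stacks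
whose `i`-th cookie has strength `q i`: all arrows are independent and `a x i = 1` with
probability `q i`. -/
def IsAnnealedIID (μ : Measure Env) (q : ℕ → ℝ) : Prop :=
  ∀ (F : Finset (ℤ × ℕ)) (f : ℤ × ℕ → ℤ), (∀ pr ∈ F, f pr = 1 ∨ f pr = -1) →
    μ {a : Env | ∀ pr ∈ F, a pr.1 pr.2 = f pr} =
      ENNReal.ofReal (∏ pr ∈ F, if f pr = 1 then q pr.2 else 1 - q pr.2)

/-- `μc` is the law of a single column of arrows with independent entries, `= 1` with
probability `q i`. -/
def IsIIDCol (μc : Measure (ℕ → ℤ)) (q : ℕ → ℝ) : Prop :=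
  ∀ (F : Finset ℕ) (f : ℕ → ℤ), (∀ i ∈ F, f i = 1 ∨ f i = -1) →
    μc {c : ℕ → ℤ | ∀ i ∈ F, c i = f i} =
      ENNReal.ofReal (∏ i ∈ F, if f i = 1 then q i else 1 - q i)

/-- `μ` is the annealed measure on arrow environments induced by the cookie measure `P`:
given `ω`, the arrows are independent with `ℙ(a x i = 1) = ω x i`. -/
def IsAnnealedOf (P : Measure CEnv) (μ : Measure Env) : Prop :=
  ∀ (F : Finset (ℤ × ℕ)) (f : ℤ × ℕ → ℤ), (∀ pr ∈ F, f pr = 1 ∨ f pr = -1) →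
    μ {a : Env | ∀ pr ∈ F, a pr.1 pr.2 = f pr} =
      ∫⁻ ω, ∏ pr ∈ F,
        ENNReal.ofReal (if f pr = 1 then ω pr.1 pr.2 else 1 - ω pr.1 pr.2) ∂P

/-- Hitting time of site `x` by the walk started at `0` (junk value if never hit). -/
def hitTime (a : Env) (x : ℤ) : ℕ := sInf {t | walkX a 0 t = x}

section Aux

variable {k : ℕ}

lemma minIdx_min (hk : k ≠ 0) (X : Fin k → ℤ) (i : Fin k) : X (minIdx hk X) ≤ X i := by
  have h : minIdx hk X ∈ Finset.univ.filter fun j => ∀ i, X j ≤ X i := Finset.min'_mem _ _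
  exact (Finset.mem_filter.mp h).2 i

lemma minIdx_eq (hk : k ≠ 0) (X : Fin k → ℤ) (j : Fin k)
    (h : ∀ i, i ≠ j → X j < X i) : minIdx hk X = j := by
  by_contra hne
  exact absurd (minIdx_min hk X j) (not_le.mpr (h _ hne))

lemma snd_succ (e : Env) (hk : k ≠ 0) (init : Fin k → ℤ) (t : ℕ) :
    (minMobState e hk init (t + 1)).2 =
    Function.update (minMobState e hk init t).2
      ((minMobState e hk init t).1 (minIdx hk (minMobState e hk init t).1))
      ((minMobState e hk init t).2
        ((minMobState e hk init t).1 (minIdx hk (minMobState e hk init t).1)) + 1) := rfl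

lemma fst_succ (e : Env) (hk : k ≠ 0) (init : Fin k → ℤ) (t : ℕ) :
    (minMobState e hk init (t + 1)).1 =
    Function.update (minMobState e hk init t).1 (minIdx hk (minMobState e hk init t).1)
      ((minMobState e hk init t).1 (minIdx hk (minMobState e hk init t).1) +
        e ((minMobState e hk init t).1 (minIdx hk (minMobState e hk init t).1))
          ((minMobState e hk init t).2
            ((minMobState e hk init t).1 (minIdx hk (minMobState e hk init t).1)) + 1)) := by
  have h : (minMobState e hk init (t + 1)).1 =
      Function.update (minMobState e hk init t).1 (minIdx hk (minMobState e hk init t).1)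
        ((minMobState e hk init t).1 (minIdx hk (minMobState e hk init t).1) +
          e ((minMobState e hk init t).1 (minIdx hk (minMobState e hk init t).1))
            (Function.update (minMobState e hk init t).2
              ((minMobState e hk init t).1 (minIdx hk (minMobState e hk init t).1))
              ((minMobState e hk init t).2
                ((minMobState e hk init t).1 (minIdx hk (minMobState e hk init t).1)) + 1)
              ((minMobState e hk init t).1 (minIdx hk (minMobState e hk init t).1)))) := rfl
  rw [h, Function.update_self]

lemma localTime_mono (e : Env) (hk : k ≠ 0) (init : Fin k → ℤ) (x : ℤ) :
    Monotone fun t => (minMobState e hk init t).2 x := by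
  apply monotone_nat_of_le_succ
  intro t
  simp only [snd_succ]
  rcases eq_or_ne x ((minMobState e hk init t).1 (minIdx hk (minMobState e hk init t).1)) with h | h
  · rw [h, Function.update_self]
    omega
  · rw [Function.update_of_ne h]

lemma state_succ (e : Env) (hk : k ≠ 0) (init : Fin k → ℤ) (t : ℕ) :
    minMobState e hk init (t + 1) =
    (Function.update (minMobState e hk init t).1 (minIdx hk (minMobState e hk init t).1)
      ((minMobState e hk init t).1 (minIdx hk (minMobState e hk init t).1) +
        e ((minMobState e hk init t).1 (minIdx hk (minMobState e hk init t).1))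
          ((minMobState e hk init t).2
            ((minMobState e hk init t).1 (minIdx hk (minMobState e hk init t).1)) + 1)),
     Function.update (minMobState e hk init t).2
      ((minMobState e hk init t).1 (minIdx hk (minMobState e hk init t).1))
      ((minMobState e hk init t).2
        ((minMobState e hk init t).1 (minIdx hk (minMobState e hk init t).1)) + 1)) :=
  Prod.ext (fst_succ e hk init t) (snd_succ e hk init t)

lemma minMobState_add (a : Env) (hk : k ≠ 0) (init : Fin k → ℤ) (t₀ : ℕ) (t : ℕ) :
    minMobState a hk init (t₀ + t) =
      ((minMobState (fun x n => a x (n + (minMobState a hk init t₀).2 x)) hk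
          ((minMobState a hk init t₀).1) t).1,
       fun x => (minMobState a hk init t₀).2 x +
         (minMobState (fun x n => a x (n + (minMobState a hk init t₀).2 x)) hk
           ((minMobState a hk init t₀).1) t).2 x) := by
  set b : Env := fun x n => a x (n + (minMobState a hk init t₀).2 x) with hb
  induction t with
  | zero =>
    refine Prod.ext rfl ?_
    funext x
    simp [minMobState]
  | succ t ih =>
    have harr : t₀ + (t + 1) = (t₀ + t) + 1 := by omega
    rw [harr]
    set S := minMobState b hk ((minMobState a hk init t₀).1) t with hS
    have harrow : a (S.1 (minIdx hk S.1))
        ((minMobState a hk init t₀).2 (S.1 (minIdx hk S.1)) + S.2 (S.1 (minIdx hk S.1)) + 1) =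
        b (S.1 (minIdx hk S.1)) (S.2 (S.1 (minIdx hk S.1)) + 1) := by
      rw [hb]
      congr 1
      omega
    simp only [state_succ, ih, Prod.mk.injEq]
    constructor
    · rw [harrow]
    · funext x
      rcases eq_or_ne x (S.1 (minIdx hk S.1)) with h | h
      · rw [h]
        rw [← hS]
        simp only [Function.update_self]
        omega
      · simp only [← hS, Function.update_of_ne h]

lemma phase1 (a : Env) (hk : k ≠ 0) (hA : IsArrow a) (init : Fin k → ℤ) (m : ℤ)
    (hinit : ∀ j, init j < m)
    (htd : ∀ j : Fin k, Filter.Tendsto (fun t => (minMobState a hk init t).1 j)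
      Filter.atTop Filter.atTop) :
    ∃ τ : ℕ, (minMobState a hk init τ).1 = (fun _ => m) ∧
      ∀ x : ℤ, m ≤ x → (minMobState a hk init τ).2 x = 0 := by
  have hne : {t : ℕ | ∀ j, m ≤ (minMobState a hk init t).1 j}.Nonempty := by
    have h : ∀ᶠ t in Filter.atTop, ∀ j, m ≤ (minMobState a hk init t).1 j :=
      Filter.eventually_all.mpr fun j => (htd j).eventually_ge_atTop m
    exact h.exists
  set τ := sInf {t : ℕ | ∀ j, m ≤ (minMobState a hk init t).1 j} with hτ
  have key : ∀ t, t ≤ τ → (∀ j, (minMobState a hk init t).1 j ≤ m) ∧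
      (∀ x, m ≤ x → (minMobState a hk init t).2 x = 0) := by
    intro t
    induction t with
    | zero => exact fun _ => ⟨fun j => le_of_lt (hinit j), fun x _ => rfl⟩
    | succ t ih =>
      intro hle
      have htτ : t < τ := lt_of_lt_of_le (Nat.lt_succ_self t) hle
      obtain ⟨h1, h2⟩ := ih (le_of_lt htτ)
      have hnotin : t ∉ {t : ℕ | ∀ j, m ≤ (minMobState a hk init t).1 j} :=
        Nat.notMem_of_lt_sInf htτ
      simp only [Set.mem_setOf_eq, not_forall, not_le] at hnotin
      obtain ⟨j₁, hj₁⟩ := hnotin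
      have hpos : (minMobState a hk init t).1 (minIdx hk (minMobState a hk init t).1) < m :=
        lt_of_le_of_lt (minIdx_min hk _ j₁) hj₁
      constructor
      · intro j
        rw [fst_succ]
        rcases eq_or_ne j (minIdx hk (minMobState a hk init t).1) with h | h
        · rw [h, Function.update_self]
          rcases hA ((minMobState a hk init t).1 (minIdx hk (minMobState a hk init t).1))
            ((minMobState a hk init t).2
              ((minMobState a hk init t).1 (minIdx hk (minMobState a hk init t).1)) + 1) with
            he | he <;> rw [he] <;> omega
        · rw [Function.update_of_ne h]
          exact h1 j
      · intro x hx
        rw [snd_succ, Function.update_of_ne (by omega : x ≠ _)]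
        exact h2 x hx
  have hτmem : τ ∈ {t : ℕ | ∀ j, m ≤ (minMobState a hk init t).1 j} := Nat.sInf_mem hne
  obtain ⟨h1, h2⟩ := key τ le_rfl
  exact ⟨τ, funext fun j => le_antisymm (h1 j) (hτmem j), h2⟩

lemma returnLemma (e : Env) (hk : k ≠ 0) (hA : IsArrow e) (init : Fin k → ℤ) (m : ℤ)
    (j : Fin k)
    (htd : Filter.Tendsto (fun t => (minMobState e hk init t).1 j) Filter.atTop Filter.atTop)
    (t : ℕ)
    (hoth : ∀ i, i ≠ j → m ≤ (minMobState e hk init t).1 i)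
    (hj : (minMobState e hk init t).1 j = m - 1) :
    ∃ t', t < t' ∧
      (∀ i, i ≠ j → (minMobState e hk init t').1 i = (minMobState e hk init t).1 i) ∧
      (minMobState e hk init t').1 j = m ∧
      ∀ x, m ≤ x → (minMobState e hk init t').2 x = (minMobState e hk init t).2 x := by
  have hne : {s : ℕ | t < s ∧ m ≤ (minMobState e hk init s).1 j}.Nonempty := by
    obtain ⟨T, hT⟩ := Filter.eventually_atTop.mp (htd.eventually_ge_atTop m)
    exact ⟨max (t + 1) T, lt_of_lt_of_le (Nat.lt_succ_self t) (le_max_left _ _),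
      hT _ (le_max_right _ _)⟩
  set t' := sInf {s : ℕ | t < s ∧ m ≤ (minMobState e hk init s).1 j} with ht'
  have ht'S : t < t' ∧ m ≤ (minMobState e hk init t').1 j := Nat.sInf_mem hne
  have key : ∀ d, t + d ≤ t' →
      (∀ i, i ≠ j → (minMobState e hk init (t + d)).1 i = (minMobState e hk init t).1 i) ∧
      (∀ x, m ≤ x → (minMobState e hk init (t + d)).2 x = (minMobState e hk init t).2 x) ∧
      (minMobState e hk init (t + d)).1 j ≤ m := by
    intro d
    induction d with
    | zero => exact fun _ => ⟨fun _ _ => rfl, fun _ _ => rfl, by rw [Nat.add_zero, hj]; omega⟩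
    | succ d ih =>
      intro hle
      have hdt : t + d < t' := by omega
      obtain ⟨h1, h2, h3⟩ := ih (le_of_lt hdt)
      -- the particle j is strictly below m at time t + d
      have hjlt : (minMobState e hk init (t + d)).1 j < m := by
        rcases Nat.eq_zero_or_pos d with hd | hd
        · subst hd
          rw [Nat.add_zero, hj]
          omega
        · have : t + d ∉ {s : ℕ | t < s ∧ m ≤ (minMobState e hk init s).1 j} :=
            Nat.notMem_of_lt_sInf hdt
          simp only [Set.mem_setOf_eq, not_and, not_le] at this
          exact this (by omega)
      have hmin : minIdx hk (minMobState e hk init (t + d)).1 = j := by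
        apply minIdx_eq
        intro i hi
        calc (minMobState e hk init (t + d)).1 j < m := hjlt
        _ ≤ (minMobState e hk init t).1 i := hoth i hi
        _ = (minMobState e hk init (t + d)).1 i := (h1 i hi).symm
      have harr : t + (d + 1) = (t + d) + 1 := by omega
      rw [harr]
      refine ⟨?_, ?_, ?_⟩
      · intro i hi
        rw [fst_succ, hmin, Function.update_of_ne hi]
        exact h1 i hi
      · intro x hx
        rw [snd_succ, hmin, Function.update_of_ne (by omega : x ≠ _)]
        exact h2 x hx
      · rw [fst_succ, hmin, Function.update_self]
        rcases hA ((minMobState e hk init (t + d)).1 j)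
          ((minMobState e hk init (t + d)).2 ((minMobState e hk init (t + d)).1 j) + 1) with
          he | he <;> rw [he] <;> omega
  obtain ⟨h1, h2, h3⟩ := key (t' - t) (by omega)
  have htt : t + (t' - t) = t' := by omega
  rw [htt] at h1 h2 h3
  exact ⟨t', ht'S.1, h1, le_antisymm h3 ht'S.2, h2⟩

lemma coupling (a b : Env) (hk : k ≠ 0) (hA : IsArrow a) (hB : IsArrow b) (m : ℤ)
    (hag : ∀ x : ℤ, m ≤ x → ∀ n, a x n = b x n)
    (htdA : ∀ j : Fin k, Filter.Tendsto (fun t => (minMobState a hk (fun _ => m) t).1 j)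
      Filter.atTop Filter.atTop)
    (htdB : ∀ j : Fin k, Filter.Tendsto (fun t => (minMobState b hk (fun _ => m) t).1 j)
      Filter.atTop Filter.atTop) :
    ∀ n : ℕ, ∃ σ σ' : ℕ, n ≤ σ ∧ n ≤ σ' ∧
      (minMobState a hk (fun _ => m) σ).1 = (minMobState b hk (fun _ => m) σ').1 ∧
      (∀ j, m ≤ (minMobState a hk (fun _ => m) σ).1 j) ∧
      ∀ x : ℤ, m ≤ x →
        (minMobState a hk (fun _ => m) σ).2 x = (minMobState b hk (fun _ => m) σ').2 x := by
  intro n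
  induction n with
  | zero => exact ⟨0, 0, le_rfl, le_rfl, rfl, fun j => le_rfl, fun x _ => rfl⟩
  | succ n ih =>
    obtain ⟨σ, σ', hσ, hσ', hX, hge, hL⟩ := ih
    set j₀ := minIdx hk (minMobState a hk (fun _ => m) σ).1 with hj₀
    set p := (minMobState a hk (fun _ => m) σ).1 j₀ with hp
    have hpm : m ≤ p := hge j₀
    -- arrow equality
    have harrow : a p ((minMobState a hk (fun _ => m) σ).2 p + 1) =
        b p ((minMobState b hk (fun _ => m) σ').2 p + 1) := by
      rw [← hL p hpm]
      exact hag p hpm _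
    set α := a p ((minMobState a hk (fun _ => m) σ).2 p + 1) with hα
    -- one step of each walk
    have hXstep : (minMobState a hk (fun _ => m) (σ + 1)).1 =
        Function.update (minMobState a hk (fun _ => m) σ).1 j₀ (p + α) := by
      rw [fst_succ]
    have hXstep' : (minMobState b hk (fun _ => m) (σ' + 1)).1 =
        Function.update (minMobState b hk (fun _ => m) σ').1 j₀ (p + α) := by
      rw [fst_succ, ← hX, harrow]
    have hXeq1 : (minMobState a hk (fun _ => m) (σ + 1)).1 =
        (minMobState b hk (fun _ => m) (σ' + 1)).1 := by
      rw [hXstep, hXstep', hX]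
    have hLstep : ∀ x : ℤ, m ≤ x → (minMobState a hk (fun _ => m) (σ + 1)).2 x =
        (minMobState b hk (fun _ => m) (σ' + 1)).2 x := by
      intro x hx
      rw [snd_succ, snd_succ, ← hX]
      rcases eq_or_ne x p with h | h
      · rw [h, Function.update_self, Function.update_self, hL p hpm]
      · rw [Function.update_of_ne h, Function.update_of_ne h, hL x hx]
    rcases le_or_gt m (p + α) with hge' | hlt
    · -- no excursion below m
      refine ⟨σ + 1, σ' + 1, by omega, by omega, hXeq1, ?_, hLstep⟩
      intro j
      rw [hXstep]
      rcases eq_or_ne j j₀ with h | h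
      · rw [h, Function.update_self]; exact hge'
      · rw [Function.update_of_ne h]; exact hge j
    · -- p = m and α = -1 : excursion below m, use the return lemma
      have hpa : p + α = m - 1 := by
        rcases hA p ((minMobState a hk (fun _ => m) σ).2 p + 1) with he | he <;>
          rw [hα, he] <;> rw [hα, he] at hlt <;> omega
      have hothA : ∀ i, i ≠ j₀ → m ≤ (minMobState a hk (fun _ => m) (σ + 1)).1 i := by
        intro i hi
        rw [hXstep, Function.update_of_ne hi]
        exact hge i
      have hjA : (minMobState a hk (fun _ => m) (σ + 1)).1 j₀ = m - 1 := by
        rw [hXstep, Function.update_self, hpa]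
      obtain ⟨tA, htA, hA1, hA2, hA3⟩ := returnLemma a hk hA (fun _ => m) m j₀ (htdA j₀)
        (σ + 1) hothA hjA
      have hothB : ∀ i, i ≠ j₀ → m ≤ (minMobState b hk (fun _ => m) (σ' + 1)).1 i := by
        intro i hi
        rw [← hXeq1]
        exact hothA i hi
      have hjB : (minMobState b hk (fun _ => m) (σ' + 1)).1 j₀ = m - 1 := by
        rw [← hXeq1]; exact hjA
      obtain ⟨tB, htB, hB1, hB2, hB3⟩ := returnLemma b hk hB (fun _ => m) m j₀ (htdB j₀)
        (σ' + 1) hothB hjB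
      have hpm' : p = m := by
        rcases hA p ((minMobState a hk (fun _ => m) σ).2 p + 1) with he | he <;>
          rw [hα, he] at hpa <;> omega
      have hXA : (minMobState a hk (fun _ => m) tA).1 = (minMobState a hk (fun _ => m) σ).1 := by
        funext i
        rcases eq_or_ne i j₀ with h | h
        · rw [h, hA2, ← hp, hpm']
        · rw [hA1 i h, hXstep, Function.update_of_ne h]
      have hXB : (minMobState b hk (fun _ => m) tB).1 = (minMobState b hk (fun _ => m) σ').1 := by
        funext i
        rcases eq_or_ne i j₀ with h | h
        · rw [h, hB2, ← hX, ← hp, hpm']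
        · rw [hB1 i h, hXstep', Function.update_of_ne h]
      refine ⟨tA, tB, by omega, by omega, ?_, ?_, ?_⟩
      · rw [hXA, hXB, hX]
      · intro j
        rw [hXA]
        exact hge j
      · intro x hx
        rw [hA3 x hx, hB3 x hx]
        exact hLstep x hx

lemma local_eq (a b : Env) (hk : k ≠ 0) (hA : IsArrow a) (hB : IsArrow b) (m : ℤ)
    (hag : ∀ x : ℤ, m ≤ x → ∀ n, a x n = b x n)
    (htdA : ∀ j : Fin k, Filter.Tendsto (fun t => (minMobState a hk (fun _ => m) t).1 j)
      Filter.atTop Filter.atTop)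
    (htdB : ∀ j : Fin k, Filter.Tendsto (fun t => (minMobState b hk (fun _ => m) t).1 j)
      Filter.atTop Filter.atTop) :
    ∀ x : ℤ, m ≤ x → minMobLocal a hk (fun _ => m) x = minMobLocal b hk (fun _ => m) x := by
  have key : ∀ (a b : Env), IsArrow a → IsArrow b →
      (∀ x : ℤ, m ≤ x → ∀ n, a x n = b x n) →
      (∀ j : Fin k, Filter.Tendsto (fun t => (minMobState a hk (fun _ => m) t).1 j)
        Filter.atTop Filter.atTop) →
      (∀ j : Fin k, Filter.Tendsto (fun t => (minMobState b hk (fun _ => m) t).1 j)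
        Filter.atTop Filter.atTop) →
      ∀ x : ℤ, m ≤ x → minMobLocal a hk (fun _ => m) x ≤ minMobLocal b hk (fun _ => m) x := by
    intro a b hA hB hag htdA htdB x hx
    apply iSup_le
    intro t
    obtain ⟨σ, σ', hσ, hσ', hX, hge, hL⟩ := coupling a b hk hA hB m hag htdA htdB t
    calc ((minMobState a hk (fun _ => m) t).2 x : ℕ∞)
        ≤ ((minMobState a hk (fun _ => m) σ).2 x : ℕ∞) := by
          exact_mod_cast localTime_mono a hk (fun _ => m) x hσ
      _ = ((minMobState b hk (fun _ => m) σ').2 x : ℕ∞) := by rw [hL x hx]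
      _ ≤ minMobLocal b hk (fun _ => m) x := le_iSup (fun t =>
          ((minMobState b hk (fun _ => m) t).2 x : ℕ∞)) σ'
  intro x hx
  exact le_antisymm (key a b hA hB hag htdA htdB x hx)
    (key b a hB hA (fun x hx n => (hag x hx n).symm) htdB htdA x hx)

lemma local_shift (a : Env) (hk : k ≠ 0) (init : Fin k → ℤ) (τ : ℕ) (x : ℤ)
    (h0 : (minMobState a hk init τ).2 x = 0) :
    minMobLocal a hk init x =
      minMobLocal (fun y n => a y (n + (minMobState a hk init τ).2 y)) hk
        ((minMobState a hk init τ).1) x := by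
  set b : Env := fun y n => a y (n + (minMobState a hk init τ).2 y) with hb
  have hadd : ∀ t, (minMobState a hk init (τ + t)).2 x =
      (minMobState b hk ((minMobState a hk init τ).1) t).2 x := by
    intro t
    rw [minMobState_add a hk init τ t]
    simp only []
    rw [← hb, h0]
    omega
  apply le_antisymm
  · apply iSup_le
    intro t
    calc ((minMobState a hk init t).2 x : ℕ∞)
        ≤ ((minMobState a hk init (τ + t)).2 x : ℕ∞) := by
          exact_mod_cast localTime_mono a hk init x (by omega : t ≤ τ + t)
      _ = ((minMobState b hk ((minMobState a hk init τ).1) t).2 x : ℕ∞) := by rw [hadd t]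
      _ ≤ _ := le_iSup (fun t =>
          ((minMobState b hk ((minMobState a hk init τ).1) t).2 x : ℕ∞)) t
  · apply iSup_le
    intro t
    calc ((minMobState b hk ((minMobState a hk init τ).1) t).2 x : ℕ∞)
        = ((minMobState a hk init (τ + t)).2 x : ℕ∞) := by rw [hadd t]
      _ ≤ minMobLocal a hk init x := le_iSup (fun t =>
          ((minMobState a hk init t).2 x : ℕ∞)) (τ + t)

end Aux

/-- For a strongly `k`-right transient arrow environment, the `k`-leftover
environment to the right of `m` does not depend on the choice of the initial positions to
the left of `m`. -/
theorem leftover_independent_of_initial_positions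
    (a : Env) (hA : IsArrow a) (hnd : NonDeg a) {k : ℕ} (hk : k ≠ 0)
    (hst : StronglyKRightTransient a hk) (m : ℤ) (init : Fin k → ℤ)
    (hinit : ∀ j, init j < m) :
    ∀ x : ℤ, m ≤ x → ∀ i : ℕ, 1 ≤ i →
      mobLO a hk init x i = mobLO a hk (fun _ => m) x i := by
  intro x hx i _
  have hL : minMobLocal a hk init x = minMobLocal a hk (fun _ => m) x := by
    obtain ⟨τ, hpos, hL0⟩ := phase1 a hk hA init m hinit (fun j => hst init j)
    have h1 : minMobLocal a hk init x =
        minMobLocal (fun y n => a y (n + (minMobState a hk init τ).2 y)) hk (fun _ => m) x := by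
      rw [local_shift a hk init τ x (hL0 x hx), hpos]
    set b : Env := fun y n => a y (n + (minMobState a hk init τ).2 y) with hb
    have hB : IsArrow b := fun y n => hA y _
    have hag : ∀ y : ℤ, m ≤ y → ∀ n, b y n = a y n := by
      intro y hy n
      rw [hb]
      simp only []
      rw [hL0 y hy, Nat.add_zero]
    have hcomp : Filter.Tendsto (fun t : ℕ => τ + t) Filter.atTop Filter.atTop :=
      Filter.tendsto_atTop_mono (fun t => Nat.le_add_left t τ) Filter.tendsto_id
    have htdB : ∀ j : Fin k, Filter.Tendsto (fun t => (minMobState b hk (fun _ => m) t).1 j)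
        Filter.atTop Filter.atTop := by
      intro j
      have heq : (fun t => (minMobState b hk (fun _ => m) t).1 j) =
          fun t => (minMobState a hk init (τ + t)).1 j := by
        funext t
        rw [minMobState_add a hk init τ t]
        simp only []
        rw [← hb, hpos]
      rw [heq]
      exact (hst init j).comp hcomp
    have h2 := local_eq b a hk hB hA m hag htdB (fun j => hst (fun _ => m) j) x hx
    rw [h1]
    exact h2
  simp only [mobLO, hL]


end
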